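/- arXiv:1805.00536 — 4 statements merged into one kernel-verified Lean document; each statement's English description precedes it below -/
import Mathlib

section
/- Let n ≥ 1, let J be a real 2n×2n matrix with J² = -𝟙, and let Ĵ be a real 2n×2n matrix with ĴJ + JĴ = 0 and Ĵ ≠ 0. Set Ĵ' := ĴᵀJ - JĴᵀ, where Ĵᵀ is the transpose of Ĵ. Then Ĵ'J + JĴ' = 0 and ½·tr(Ĵ·J·Ĵ') = tr(ĴᵀĴ) > 0. In particular the alternating form τ_J(Ĵ₁,Ĵ₂) := ½ tr(Ĵ₁ J Ĵ₂) is nondegenerate on the space of matrices anticommuting with J. -/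
open Matrix

/-!
If `J² = -1` then `X ↦ XJ - JX` lands in the matrices anticommuting with `J`, since
`(XJ - JX)J + J(XJ - JX) = X J² - J² X = 0`. If moreover `Ĵ` anticommutes with `J`, cycling the
trace and moving `J` past `Ĵ` gives `tr(Ĵ J (XJ - JX)) = 2 tr(X Ĵ)` for every `X`. Taking `X = Ĵᵀ`
pairs `Ĵ` with `Ĵ'` to the squared Frobenius norm of `Ĵ`, which is positive for `Ĵ ≠ 0`.
-/

theorem commutator_anticommute_of_mul_self_eq_neg_one {R : Type*} [Ring R] {J : R}
    (hJ : J * J = -1) (X : R) : (X * J - J * X) * J + J * (X * J - J * X) = 0 := by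
  calc (X * J - J * X) * J + J * (X * J - J * X) = X * (J * J) - (J * J) * X := by noncomm_ring
    _ = 0 := by rw [hJ]; noncomm_ring

namespace Matrix

variable {m R : Type*} [Fintype m] [DecidableEq m] [CommRing R]

theorem trace_mul_mul_commutator_of_anticommute {J A : Matrix m m R} (hJ : J * J = -1)
    (hA : A * J + J * A = 0) (X : Matrix m m R) :
    trace (A * J * (X * J - J * X)) = 2 * trace (X * A) := by
  have hJA : J * A = -(A * J) := eq_neg_of_add_eq_zero_right hA
  have hcycle : trace (A * J * X * J) = trace (A * X) := by
    rw [trace_mul_cycle, ← mul_assoc, hJA, neg_mul, mul_assoc A, hJ]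
    simp
  rw [mul_sub, trace_sub, ← mul_assoc, hcycle, ← mul_assoc (A * J), mul_assoc A J J, hJ,
    trace_mul_comm X A]
  simp only [mul_neg, neg_mul, mul_one, trace_neg]
  ring

theorem trace_transpose_mul_self_pos {m n : Type*} [Fintype m] [Fintype n]
    {A : Matrix m n ℝ} (hA : A ≠ 0) : 0 < trace (Aᵀ * A) := by
  rw [← conjTranspose_eq_transpose_of_trivial]
  exact (posSemidef_conjTranspose_mul_self A).trace_nonneg.lt_of_ne'
    (trace_conjTranspose_mul_self_eq_zero_iff.not.mpr hA)

end Matrix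

theorem tau_nondegenerate_general
    (n : ℕ)
    (J : Matrix (Fin (2 * n)) (Fin (2 * n)) ℝ) (hJ : J * J = -1)
    (Jhat : Matrix (Fin (2 * n)) (Fin (2 * n)) ℝ)
    (h : Jhat * J + J * Jhat = 0) (hne : Jhat ≠ 0) :
    (Jhatᵀ * J - J * Jhatᵀ) * J + J * (Jhatᵀ * J - J * Jhatᵀ) = 0 ∧
      (1 / 2 : ℝ) * Matrix.trace (Jhat * J * (Jhatᵀ * J - J * Jhatᵀ)) =
        Matrix.trace (Jhatᵀ * Jhat) ∧
      0 < Matrix.trace (Jhatᵀ * Jhat) := by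
  refine ⟨commutator_anticommute_of_mul_self_eq_neg_one hJ _, ?_,
    trace_transpose_mul_self_pos hne⟩
  rw [trace_mul_mul_commutator_of_anticommute hJ h]
  ring

/-- For a linear complex structure `J` (`J² = -𝟙`) and a nonzero
matrix `Ĵ` anticommuting with `J`, the matrix `Ĵ' := ĴᵀJ - JĴᵀ` also
anticommutes with `J` and satisfies `½ tr(Ĵ J Ĵ') = tr(ĴᵀĴ) > 0`.  In
particular the form `τ_J` is nondegenerate on the space of matrices
anticommuting with `J`. -/
theorem tau_nondegenerate
    (n : ℕ) (hn : 1 ≤ n)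
    (J : Matrix (Fin (2 * n)) (Fin (2 * n)) ℝ) (hJ : J * J = -1)
    (Jhat : Matrix (Fin (2 * n)) (Fin (2 * n)) ℝ)
    (h : Jhat * J + J * Jhat = 0) (hne : Jhat ≠ 0) :
    (Jhatᵀ * J - J * Jhatᵀ) * J + J * (Jhatᵀ * J - J * Jhatᵀ) = 0 ∧
      (1 / 2 : ℝ) * Matrix.trace (Jhat * J * (Jhatᵀ * J - J * Jhatᵀ)) =
        Matrix.trace (Jhatᵀ * Jhat) ∧
      0 < Matrix.trace (Jhatᵀ * Jhat) :=
  tau_nondegenerate_general n J hJ Jhat h hne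
end

section
/- Let n ≥ 1 and let J₀ denote the real 2n×2n block matrix ((0, -𝟙ₙ),(𝟙ₙ, 0)). Let (g_k) be a sequence in SL(2n,ℝ) such that the sequence of matrices g_k J₀ g_k⁻¹ converges to J₀. Then there exists a sequence (h_k) of matrices in SL(2n,ℝ) with h_k J₀ = J₀ h_k for all k such that g_k h_k converges to the identity matrix. -/
open Matrix

/-- The standard linear complex structure `J₀ = ((0, -𝟙ₙ),(𝟙ₙ, 0))` on `ℝ^{2n}`,
with `ℝ^{2n}` indexed by `Fin n ⊕ Fin n`. -/
noncomputable def J0 (n : ℕ) : Matrix (Fin n ⊕ Fin n) (Fin n ⊕ Fin n) ℝ :=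
  Matrix.fromBlocks 0 (-1) 1 0

/-!
If `A² = J² = -1`, then `Q = ½(1 - JA)` satisfies `QA = JQ`, and `Q = 1` when `A = J`. For
`A_k = g_k J₀ g_k⁻¹ → J₀` the matrices `P_k = Q(A_k) g_k` therefore commute with `J₀`, while
`Q(A_k) → 1`. Take `h_k = P_k⁻¹`, rescaled by a positive scalar (which also commutes with `J₀`)
to have determinant one; then `g_k h_k` is the rescaled `Q(A_k)⁻¹`, which tends to `1`.
-/

open Filter Topology

theorem one_sub_mul_mul_eq_mul_one_sub_mul {R : Type*} [Ring R] {J A : R}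
    (hJ : J * J = -1) (hA : A * A = -1) : (1 - J * A) * A = J * (1 - J * A) := by
  rw [sub_mul, mul_sub, mul_assoc, hA, ← mul_assoc, hJ]
  noncomm_ring

theorem J0_mul_self (n : ℕ) : J0 n * J0 n = -1 := by
  rw [J0, fromBlocks_multiply, ← fromBlocks_one, fromBlocks_neg]
  simp

namespace Matrix

variable {m : Type*} [Fintype m] [DecidableEq m]

theorem conj_mul_conj {R : Type*} [CommRing R] (g J : Matrix m m R) (hg : IsUnit g.det) :
    g * J * g⁻¹ * (g * J * g⁻¹) = g * (J * J) * g⁻¹ := by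
  simp only [mul_assoc, nonsing_inv_mul_cancel_left _ _ hg]

theorem commute_nonsing_inv_left {R : Type*} [CommRing R] {P J : Matrix m m R}
    (h : Commute P J) (hP : IsUnit P.det) : Commute P⁻¹ J :=
  calc P⁻¹ * J = P⁻¹ * (J * P) * P⁻¹ := by
        rw [mul_assoc, mul_nonsing_inv_cancel_right _ _ hP]
    _ = J * P⁻¹ := by rw [← h.eq, ← mul_assoc, nonsing_inv_mul _ hP, one_mul]

noncomputable def intertwiner (J A : Matrix m m ℝ) : Matrix m m ℝ :=
  (2⁻¹ : ℝ) • (1 - J * A)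

theorem intertwiner_self {J : Matrix m m ℝ} (hJ : J * J = -1) : intertwiner J J = 1 := by
  rw [intertwiner, hJ, sub_neg_eq_add, ← two_smul ℝ, smul_smul]
  norm_num

theorem intertwiner_mul {J A : Matrix m m ℝ} (hJ : J * J = -1) (hA : A * A = -1) :
    intertwiner J A * A = J * intertwiner J A := by
  rw [intertwiner, smul_mul_assoc, mul_smul_comm, one_sub_mul_mul_eq_mul_one_sub_mul hJ hA]

theorem continuous_intertwiner (J : Matrix m m ℝ) : Continuous (intertwiner J) := by
  unfold intertwiner
  fun_prop

theorem commute_intertwiner_conj_mul {J g : Matrix m m ℝ} (hJ : J * J = -1)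
    (hg : IsUnit g.det) : Commute (intertwiner J (g * J * g⁻¹) * g) J := by
  have hA : g * J * g⁻¹ * (g * J * g⁻¹) = -1 := by
    rw [conj_mul_conj g J hg, hJ, mul_neg_one, neg_mul, mul_nonsing_inv _ hg]
  calc intertwiner J (g * J * g⁻¹) * g * J
      = intertwiner J (g * J * g⁻¹) * (g * J * g⁻¹) * g := by
        rw [mul_assoc _ (g * J * g⁻¹), nonsing_inv_mul_cancel_right _ _ hg, mul_assoc]
    _ = J * (intertwiner J (g * J * g⁻¹) * g) := by
        rw [intertwiner_mul hJ hA, mul_assoc]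

noncomputable def detNormalize (M : Matrix m m ℝ) : Matrix m m ℝ :=
  M.det ^ (-(Fintype.card m : ℝ)⁻¹) • M

theorem det_detNormalize {M : Matrix m m ℝ} (hM : 0 < M.det) : (detNormalize M).det = 1 := by
  rw [detNormalize, det_smul]
  rcases isEmpty_or_nonempty m with hm | hm
  · simp [det_isEmpty]
  have hcard : (Fintype.card m : ℝ) ≠ 0 := by positivity
  rw [← Real.rpow_natCast, ← Real.rpow_mul hM.le, neg_mul, inv_mul_cancel₀ hcard,
    Real.rpow_neg_one, inv_mul_cancel₀ hM.ne']

theorem detNormalize_one : detNormalize (1 : Matrix m m ℝ) = 1 := by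
  simp [detNormalize]

theorem mul_detNormalize {g : Matrix m m ℝ} (hg : g.det = 1) (M : Matrix m m ℝ) :
    g * detNormalize M = detNormalize (g * M) := by
  rw [detNormalize, detNormalize, det_mul, hg, one_mul, mul_smul_comm]

protected theorem _root_.Commute.detNormalize_left {M J : Matrix m m ℝ} (h : Commute M J) :
    Commute (detNormalize M) J :=
  h.smul_left _

theorem continuousAt_detNormalize {M : Matrix m m ℝ} (hM : M.det ≠ 0) :
    ContinuousAt detNormalize M :=
  ((Real.continuousAt_rpow_const _ _ (Or.inl hM)).comp
    (continuous_id.matrix_det.continuousAt)).smul continuousAt_id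

theorem continuousAt_nonsing_inv_one : ContinuousAt Inv.inv (1 : Matrix m m ℝ) :=
  continuousAt_matrix_inv _ (by simp [continuousAt_inv₀ (one_ne_zero' ℝ)])

theorem tendsto_inv_intertwiner {ι : Type*} {l : Filter ι} {J : Matrix m m ℝ}
    (hJ : J * J = -1) {A : ι → Matrix m m ℝ} (hA : Tendsto A l (𝓝 J)) :
    Tendsto (fun i => (intertwiner J (A i))⁻¹) l (𝓝 1) := by
  have h := ((continuous_intertwiner J).tendsto J).comp hA
  rw [intertwiner_self hJ] at h
  have h' := continuousAt_nonsing_inv_one.tendsto.comp h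
  rwa [inv_one] at h'

end Matrix

theorem sl_orbit_proper_general (n : ℕ)
    (g : ℕ → Matrix (Fin n ⊕ Fin n) (Fin n ⊕ Fin n) ℝ)
    (hdet : ∀ k, (g k).det = 1)
    (hconv : Filter.Tendsto (fun k => g k * J0 n * (g k)⁻¹)
      Filter.atTop (nhds (J0 n))) :
    ∃ h : ℕ → Matrix (Fin n ⊕ Fin n) (Fin n ⊕ Fin n) ℝ,
      (∀ k, (h k).det = 1 ∧ h k * J0 n = J0 n * h k) ∧
        Filter.Tendsto (fun k => g k * h k) Filter.atTop (nhds 1) := by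
  have hg (k : ℕ) : IsUnit (g k).det := by simp [hdet k]
  set Q := fun k => intertwiner (J0 n) (g k * J0 n * (g k)⁻¹)
  have hQinv : Tendsto (fun k => (Q k)⁻¹) atTop (𝓝 1) :=
    tendsto_inv_intertwiner (J0_mul_self n) hconv
  have hdet_inv (k : ℕ) : ((Q k * g k)⁻¹).det = ((Q k)⁻¹).det := by
    simp [det_nonsing_inv, det_mul, hdet k]
  refine ⟨fun k => if 0 < ((Q k)⁻¹).det then detNormalize (Q k * g k)⁻¹ else 1,
    fun k => ?_, ?_⟩
  · dsimp only
    split_ifs with hpos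
    · have hP : IsUnit (Q k * g k).det := by
        rw [← isUnit_nonsing_inv_det_iff, isUnit_iff_ne_zero, hdet_inv k]
        exact hpos.ne'
      refine ⟨det_detNormalize (hdet_inv k ▸ hpos), ?_⟩
      exact ((commute_nonsing_inv_left
        (commute_intertwiner_conj_mul (J0_mul_self n) (hg k)) hP).detNormalize_left).eq
    · simp
  · have hpos : ∀ᶠ k in atTop, 0 < ((Q k)⁻¹).det :=
      ((continuous_id.matrix_det.tendsto _).comp hQinv).eventually
        (eventually_gt_nhds (by simp))
    have hlim : Tendsto (fun k => detNormalize (Q k)⁻¹) atTop (𝓝 1) := by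
      have h := (continuousAt_detNormalize (by simp)).tendsto.comp hQinv
      rwa [detNormalize_one] at h
    refine hlim.congr' (hpos.mono fun k hk => ?_)
    dsimp only
    rw [if_pos hk, mul_detNormalize (hdet k), Matrix.mul_inv_rev, ← mul_assoc,
      mul_nonsing_inv _ (hg k), one_mul]

/-- Properness of the map `SL(2n,ℝ)/H → ℝ^{2n×2n}`, `g ↦ gJ₀g⁻¹`:
if `g_k ∈ SL(2n,ℝ)` and `g_k J₀ g_k⁻¹ → J₀`, then there exist `h_k ∈ SL(2n,ℝ)`
commuting with `J₀` such that `g_k h_k → 𝟙`. -/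
theorem sl_orbit_proper (n : ℕ) (hn : 1 ≤ n)
    (g : ℕ → Matrix (Fin n ⊕ Fin n) (Fin n ⊕ Fin n) ℝ)
    (hdet : ∀ k, (g k).det = 1)
    (hconv : Filter.Tendsto (fun k => g k * J0 n * (g k)⁻¹)
      Filter.atTop (nhds (J0 n))) :
    ∃ h : ℕ → Matrix (Fin n ⊕ Fin n) (Fin n ⊕ Fin n) ℝ,
      (∀ k, (h k).det = 1 ∧ h k * J0 n = J0 n * h k) ∧
        Filter.Tendsto (fun k => g k * h k) Filter.atTop (nhds 1) :=
  sl_orbit_proper_general n g hdet hconv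
end

section
/- Let n ≥ 1, let J be a real 2n×2n matrix with J² = -𝟙 that is compatible with ω₀ (i.e. ω₀(Ju,Jv) = ω₀(u,v) for all u,v and ω₀(u,Ju) > 0 for all u ≠ 0), and let Ĵ be a nonzero real 2n×2n matrix with ĴJ + JĴ = 0 and ω₀(Ĵu,v) + ω₀(u,Ĵv) = 0 for all u,v ∈ ℝ^{2n}. Then tr(Ĵ²) > 0. Hence the symmetric bilinear form (Ĵ₁,Ĵ₂) ↦ ½ tr(Ĵ₁Ĵ₂) is positive definite on the space of infinitesimal ω₀-compatible complex structures at J. -/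
/-!
The bilinear form `g(u, v) = ω₀(u, Jv)` is an inner product whose Gram matrix is `G = J₀ᵀ J`
(its symmetry comes from `J² = -1` together with the `ω₀`-invariance of `J`). The conditions on
`Ĵ` say precisely that `Ĵ` is `g`-self-adjoint, i.e. that `G Ĵ` is symmetric. Writing
`G = Yᵀ Y` with `Y` invertible, `M = Y Ĵ Y⁻¹` is symmetric, hence
`tr (Ĵ²) = tr (M²) = tr (Mᵀ M) = ∑ Mᵢⱼ² > 0`.
-/

open Matrix

/-- The standard symplectic form `ω₀(u,v) = ⟨J₀u, v⟩` on `ℝ^{2n}`. -/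
noncomputable def omega0 (n : ℕ) (u v : Fin n ⊕ Fin n → ℝ) : ℝ :=
  dotProduct ((J0 n).mulVec u) v

namespace Matrix

section PosDef

open scoped ComplexOrder

variable {n 𝕜 : Type*} [Fintype n] [RCLike 𝕜]

theorem trace_conjTranspose_mul_self_pos {m : Type*} [Fintype m] {A : Matrix m n 𝕜} (hA : A ≠ 0) :
    0 < (Aᴴ * A).trace :=
  (posSemidef_conjTranspose_mul_self A).trace_nonneg.lt_of_ne'
    (trace_conjTranspose_mul_self_eq_zero_iff.not.mpr hA)

variable [DecidableEq n]

open scoped MatrixOrder in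
theorem PosDef.exists_units_eq_conjTranspose_mul_self {G : Matrix n n 𝕜} (hG : G.PosDef) :
    ∃ U : (Matrix n n 𝕜)ˣ, G = (U : Matrix n n 𝕜)ᴴ * U := by
  obtain ⟨Y, hY, rfl⟩ :=
    CStarAlgebra.isStrictlyPositive_iff_eq_star_mul_self.mp hG.isStrictlyPositive
  exact ⟨hY.unit, rfl⟩

theorem PosDef.trace_mul_self_pos_of_isHermitian_mul {G X : Matrix n n 𝕜}
    (hG : G.PosDef) (hGX : (G * X).IsHermitian) (hX : X ≠ 0) : 0 < (X * X).trace := by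
  obtain ⟨U, rfl⟩ := hG.exists_units_eq_conjTranspose_mul_self
  set M : Matrix n n 𝕜 := U * X * (↑U⁻¹ : Matrix n n 𝕜)
  have hXM : X = (↑U⁻¹ : Matrix n n 𝕜) * M * U := by simp [M, Matrix.mul_assoc]
  have hM : M.IsHermitian := by
    have hinv : (↑U⁻¹ : Matrix n n 𝕜)ᴴ * (U : Matrix n n 𝕜)ᴴ = 1 := by
      rw [← conjTranspose_mul, Units.mul_inv, conjTranspose_one]
    have hconj :
        M = (↑U⁻¹ : Matrix n n 𝕜)ᴴ * ((U : Matrix n n 𝕜)ᴴ * U * X) * (↑U⁻¹ : Matrix n n 𝕜) := by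
      simp only [M, ← Matrix.mul_assoc, hinv, Matrix.one_mul]
    rw [hconj]
    exact isHermitian_conjTranspose_mul_mul _ hGX
  have hM0 : M ≠ 0 := fun h => hX (by rw [hXM, h]; simp)
  calc 0 < (Mᴴ * M).trace := trace_conjTranspose_mul_self_pos hM0
    _ = ((↑U⁻¹ : Matrix n n 𝕜) * (M * M) * U).trace := by rw [hM.eq, trace_units_conj']
    _ = (X * X).trace := by rw [hXM]; simp [Matrix.mul_assoc]

end PosDef

section Transpose

variable {ι R : Type*} [Fintype ι] [CommRing R]

theorem ext_of_dotProduct_mulVec [DecidableEq ι] {M N : Matrix ι ι R}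
    (h : ∀ u v, u ⬝ᵥ M *ᵥ v = u ⬝ᵥ N *ᵥ v) : M = N :=
  (toLinearMap₂' R).injective <| LinearMap.ext₂ fun u v => by
    rw [toLinearMap₂'_apply', toLinearMap₂'_apply', h]

theorem isSymm_mul_of_transpose_mul_mul_eq [DecidableEq ι] {Ω J : Matrix ι ι R}
    (hΩ : Ωᵀ = -Ω) (hJ : J * J = -1) (hΩJ : Jᵀ * Ω * J = Ω) : (Ω * J).IsSymm := by
  have hJinv : J * -J = 1 := by rw [Matrix.mul_neg, hJ, neg_neg]
  calc (Ω * J)ᵀ = -(Jᵀ * Ω * (J * -J)) := by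
        rw [transpose_mul, hΩ, hJinv, Matrix.mul_one, Matrix.mul_neg]
    _ = Ω * J := by rw [← Matrix.mul_assoc, hΩJ, Matrix.mul_neg, neg_neg]

theorem isSymm_mul_mul_of_anticommute {Ω J K : Matrix ι ι R} (hΩJ : (Ω * J).IsSymm)
    (hK : Kᵀ * Ω + Ω * K = 0) (hJK : K * J + J * K = 0) : (Ω * J * K).IsSymm :=
  calc (Ω * J * K)ᵀ = Kᵀ * Ω * J := by rw [transpose_mul, hΩJ.eq, Matrix.mul_assoc]
    _ = Ω * J * K := by
      rw [eq_neg_of_add_eq_zero_left hK, Matrix.neg_mul, Matrix.mul_assoc,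
        eq_neg_of_add_eq_zero_left hJK, Matrix.mul_neg, neg_neg, Matrix.mul_assoc]

end Transpose

end Matrix

theorem transpose_J0 (n : ℕ) : (J0 n)ᵀ = -J0 n := by
  rw [J0, fromBlocks_transpose, fromBlocks_neg]
  simp

theorem omega0_eq_dotProduct_mulVec (n : ℕ) (u v : Fin n ⊕ Fin n → ℝ) :
    omega0 n u v = u ⬝ᵥ (J0 n)ᵀ *ᵥ v := by
  rw [omega0, dotProduct_mulVec, vecMul_transpose]

theorem omega0_mulVec_left (n : ℕ) (M : Matrix (Fin n ⊕ Fin n) (Fin n ⊕ Fin n) ℝ)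
    (u v : Fin n ⊕ Fin n → ℝ) : omega0 n (M *ᵥ u) v = u ⬝ᵥ (Mᵀ * (J0 n)ᵀ) *ᵥ v := by
  rw [omega0_eq_dotProduct_mulVec, ← mulVec_mulVec, dotProduct_mulVec u, vecMul_transpose]

theorem omega0_mulVec_right (n : ℕ) (N : Matrix (Fin n ⊕ Fin n) (Fin n ⊕ Fin n) ℝ)
    (u v : Fin n ⊕ Fin n → ℝ) : omega0 n u (N *ᵥ v) = u ⬝ᵥ ((J0 n)ᵀ * N) *ᵥ v := by
  rw [omega0_eq_dotProduct_mulVec, mulVec_mulVec]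

theorem trace_sq_pos_of_compatible_general
    (n : ℕ)
    (J : Matrix (Fin n ⊕ Fin n) (Fin n ⊕ Fin n) ℝ) (hJ : J * J = -1)
    (hω : ∀ u v, omega0 n (J.mulVec u) (J.mulVec v) = omega0 n u v)
    (hpos : ∀ u, u ≠ 0 → 0 < omega0 n u (J.mulVec u))
    (Jhat : Matrix (Fin n ⊕ Fin n) (Fin n ⊕ Fin n) ℝ) (hne : Jhat ≠ 0)
    (hanti : Jhat * J + J * Jhat = 0)
    (hskew : ∀ u v, omega0 n (Jhat.mulVec u) v + omega0 n u (Jhat.mulVec v) = 0) :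
    0 < Matrix.trace (Jhat * Jhat) := by
  have hJ0 : (J0 n)ᵀᵀ = -(J0 n)ᵀ := by rw [transpose_transpose, transpose_J0, neg_neg]
  have hJ_symplectic : Jᵀ * (J0 n)ᵀ * J = (J0 n)ᵀ := ext_of_dotProduct_mulVec fun u v => by
    rw [← mulVec_mulVec, ← omega0_mulVec_left, hω, omega0_eq_dotProduct_mulVec]
  have hJhat_skew : Jhatᵀ * (J0 n)ᵀ + (J0 n)ᵀ * Jhat = 0 :=
    ext_of_dotProduct_mulVec fun u v => by
      rw [add_mulVec, dotProduct_add, ← omega0_mulVec_left, ← omega0_mulVec_right, hskew,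
        zero_mulVec, dotProduct_zero]
  have hG_symm := isSymm_mul_of_transpose_mul_mul_eq hJ0 hJ hJ_symplectic
  have hG : ((J0 n)ᵀ * J).PosDef :=
    .of_dotProduct_mulVec_pos (isHermitian_iff_isSymm.mpr hG_symm) fun u hu => by
      simpa only [star_trivial, omega0_mulVec_right] using hpos u hu
  exact hG.trace_mul_self_pos_of_isHermitian_mul
    (isHermitian_iff_isSymm.mpr (isSymm_mul_mul_of_anticommute hG_symm hJhat_skew hanti)) hne

/-- For a linear complex structure `J` compatible with `ω₀` and a
nonzero matrix `Ĵ` with `ĴJ + JĴ = 0` and `ω₀(Ĵu,v) + ω₀(u,Ĵv) = 0` for all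
`u,v`, one has `tr(Ĵ²) > 0`; hence `(Ĵ₁,Ĵ₂) ↦ ½ tr(Ĵ₁Ĵ₂)` is positive definite
on the space of infinitesimal `ω₀`-compatible complex structures at `J`. -/
theorem trace_sq_pos_of_compatible
    (n : ℕ) (hn : 1 ≤ n)
    (J : Matrix (Fin n ⊕ Fin n) (Fin n ⊕ Fin n) ℝ) (hJ : J * J = -1)
    (hω : ∀ u v, omega0 n (J.mulVec u) (J.mulVec v) = omega0 n u v)
    (hpos : ∀ u, u ≠ 0 → 0 < omega0 n u (J.mulVec u))
    (Jhat : Matrix (Fin n ⊕ Fin n) (Fin n ⊕ Fin n) ℝ) (hne : Jhat ≠ 0)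
    (hanti : Jhat * J + J * Jhat = 0)
    (hskew : ∀ u v, omega0 n (Jhat.mulVec u) v + omega0 n u (Jhat.mulVec v) = 0) :
    0 < Matrix.trace (Jhat * Jhat) :=
  trace_sq_pos_of_compatible_general n J hJ hω hpos Jhat hne hanti hskew
end

section
/- Let n ≥ 2 and let J₀ denote the real 2n×2n block matrix ((0, -𝟙ₙ),(𝟙ₙ, 0)). Then the symmetric bilinear form (Ĵ₁,Ĵ₂) ↦ ½ tr(Ĵ₁Ĵ₂) on the space {Ĵ ∈ ℝ^{2n×2n} : ĴJ₀ + J₀Ĵ = 0} is indefinite: there exist matrices Ĵ₊ and Ĵ₋, each anticommuting with J₀, such that tr(Ĵ₊²) > 0 and tr(Ĵ₋²) < 0. -/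
open Matrix

/-!
In block form every `Ĵ = ((A, B), (B, -A))` anticommutes with `J₀`, and `tr Ĵ² = 2 tr (A² + B²)`.
Taking `A = 𝟙, B = 0` gives `tr Ĵ² = 2n > 0`; taking `A = 0` and `B` the nonzero skew matrix
`Eᵢⱼ - Eⱼᵢ` (`i ≠ j`, possible as soon as `n ≥ 2`) gives `tr Ĵ² = -4 < 0`.
-/

namespace Matrix

variable {m n R : Type*} [Fintype m] [Fintype n] [CommRing R]

theorem trace_fromBlocks (A : Matrix m m R) (B : Matrix m n R) (C : Matrix n m R)
    (D : Matrix n n R) : trace (fromBlocks A B C D) = trace A + trace D := by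
  simp [trace, Fintype.sum_sum_type]

theorem trace_fromBlocks_mul_self (A B : Matrix m m R) :
    trace (fromBlocks A B B (-A) * fromBlocks A B B (-A)) = 2 * trace (A * A + B * B) := by
  rw [fromBlocks_multiply, trace_fromBlocks]
  simp only [neg_mul, mul_neg, neg_neg, trace_add]
  ring

variable [DecidableEq m]

theorem fromBlocks_anticommutes_fromBlocks_zero_neg_one_one_zero (A B : Matrix m m R) :
    fromBlocks A B B (-A) * fromBlocks 0 (-1) 1 0 +
      fromBlocks 0 (-1) 1 0 * fromBlocks A B B (-A) = 0 := by
  simp [fromBlocks_multiply, fromBlocks_add]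

theorem trace_single_sub_single_mul_self {i j : m} (hij : i ≠ j) :
    trace ((single i j (1 : R) - single j i 1) * (single i j 1 - single j i 1)) = -2 := by
  simp [sub_mul, mul_sub, hij, hij.symm, trace_single_eq_same]
  norm_num

end Matrix

/-- For `n ≥ 2`, the symmetric bilinear form
`(Ĵ₁,Ĵ₂) ↦ ½ tr(Ĵ₁Ĵ₂)` on the space of matrices anticommuting with `J₀` is
indefinite: there are matrices `Ĵ₊, Ĵ₋` anticommuting with `J₀` with
`tr(Ĵ₊²) > 0` and `tr(Ĵ₋²) < 0`. -/
theorem trace_pairing_indefinite (n : ℕ) (hn : 2 ≤ n) :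
    ∃ Jp Jm : Matrix (Fin n ⊕ Fin n) (Fin n ⊕ Fin n) ℝ,
      Jp * J0 n + J0 n * Jp = 0 ∧
      Jm * J0 n + J0 n * Jm = 0 ∧
      0 < Matrix.trace (Jp * Jp) ∧
      Matrix.trace (Jm * Jm) < 0 := by
  have : Nontrivial (Fin n) := Fin.nontrivial_iff_two_le.mpr hn
  obtain ⟨i, j, hij⟩ := exists_pair_ne (Fin n)
  set B : Matrix (Fin n) (Fin n) ℝ := single i j 1 - single j i 1
  refine ⟨fromBlocks 1 0 0 (-1), fromBlocks 0 B B (-0),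
    fromBlocks_anticommutes_fromBlocks_zero_neg_one_one_zero _ _,
    fromBlocks_anticommutes_fromBlocks_zero_neg_one_one_zero _ _, ?_, ?_⟩
  · rw [trace_fromBlocks_mul_self]
    simpa using Fin.pos_iff_nonempty.mpr ⟨i⟩
  · rw [trace_fromBlocks_mul_self, zero_mul, zero_add, trace_single_sub_single_mul_self hij]
    norm_num
end
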